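/- Convex Wasserstein upper bound (Corollary 1 of the paper): under the same setting, the squared 2-Wasserstein distance between N(Hg, G̃ ⊗ Σ_v) and N(y, I_t ⊗ Σ_v) is bounded by ‖Hg − y‖² + t·tr(Σ_v)·(‖g‖² + 1), and the right-hand side is a convex function of g. -/

import Mathlib

open Matrix Kronecker MeasureTheory ProbabilityTheory

/-- Extension of a finite vector by zero. -/
noncomputable def gext {m : ℕ} (g : EuclideanSpace ℝ (Fin m)) (n : ℕ) : ℝ :=
  if h : n < m then g ⟨n, h⟩ else 0

/-- The matrix `G̃ ∈ ℝ^{t×t}` with `G̃_{i,j} = ∑_{n=1}^{m-|i-j|} g_n g_{n+|i-j|}`. -/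
noncomputable def Gtilde {m : ℕ} (t : ℕ) (g : EuclideanSpace ℝ (Fin m)) :
    Matrix (Fin t) (Fin t) ℝ :=
  fun i j =>
    ∑ n ∈ Finset.range (m - ((i : ℤ) - (j : ℤ)).natAbs),
      gext g n * gext g (n + ((i : ℤ) - (j : ℤ)).natAbs)

/-- The multivariate Gaussian measure `N(m, Σ)` on `ι → ℝ`. -/
noncomputable def gaussianVec {ι : Type*} [Fintype ι] [DecidableEq ι]
    (m : ι → ℝ) {S : Matrix ι ι ℝ} (hS : S.PosSemidef) : Measure (ι → ℝ) :=
  (Measure.pi fun _ : ι => gaussianReal 0 1).map fun x => m + ((hS.1.eigenvectorUnitary : Matrix ι ι ℝ) *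
      diagonal (fun i => Real.sqrt (hS.1.eigenvalues i)) *
      (star (hS.1.eigenvectorUnitary : Matrix ι ι ℝ))) *ᵥ x

/-- Squared 2-Wasserstein distance. -/
noncomputable def W2sq {ι : Type*} [Fintype ι] (μ ν : Measure (ι → ℝ)) : ℝ :=
  ⨅ γ : {γ : Measure ((ι → ℝ) × (ι → ℝ)) //
      γ.map Prod.fst = μ ∧ γ.map Prod.snd = ν},
    ∫ p, ∑ i, (p.1 i - p.2 i) ^ 2 ∂(γ : Measure ((ι → ℝ) × (ι → ℝ)))


/-! Couple the two Gaussians independently: draw one standard Gaussian vector indexed by `ι ⊕ ι`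
and push its `inl` and `inr` halves through the symmetric square roots of the two covariances.
The squared distance of the coupled samples then has mean `‖m₁ - m₂‖² + tr S₁ + tr S₂`, as the two
halves are independent and centred. For `S₁ = G̃ ⊗ Σ_v` and `S₂ = I_t ⊗ Σ_v` this is the stated
bound, because every diagonal entry of `G̃` equals `‖g‖²`. The bound is `‖Hg - y‖²` plus a
nonnegative multiple of `‖g‖² + 1`, hence convex in `g`. -/

section StdGaussian

variable {κ : Type*} [Fintype κ]

lemma memLp_dotProduct_stdGaussian (v : κ → ℝ) :
    MemLp (fun w => v ⬝ᵥ w) 2 (Measure.pi fun _ : κ => gaussianReal 0 1) :=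
  memLp_finsetSum _ fun j _ => ((memLp_id_gaussianReal 2).comp_measurePreserving
    (measurePreserving_eval _ j)).const_mul (v j)

lemma memLp_const_add_dotProduct_stdGaussian (c : ℝ) (v : κ → ℝ) :
    MemLp (fun w => c + v ⬝ᵥ w) 2 (Measure.pi fun _ : κ => gaussianReal 0 1) :=
  (memLp_const c).add (memLp_dotProduct_stdGaussian v)

lemma integral_dotProduct_stdGaussian (v : κ → ℝ) :
    ∫ w, v ⬝ᵥ w ∂(Measure.pi fun _ : κ => gaussianReal 0 1) = 0 := by
  unfold dotProduct
  rw [integral_finsetSum _ fun j _ =>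
    (integrable_eval ((memLp_id_gaussianReal 1).integrable le_rfl)).const_mul (v j)]
  simp [integral_const_mul, integral_eval, integral_id_gaussianReal]

lemma variance_dotProduct_stdGaussian (v : κ → ℝ) :
    Var[fun w => v ⬝ᵥ w; Measure.pi fun _ : κ => gaussianReal 0 1] = ∑ j, v j ^ 2 := by
  have h := variance_sum_pi (μ := fun _ : κ => gaussianReal 0 1) (X := fun j x => v j * x)
    fun j => (memLp_id_gaussianReal 2).const_mul (v j)
  convert h using 2 with j
  · ext w; simp [dotProduct]
  · change _ = Var[fun x => v j * id x; gaussianReal 0 1]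
    rw [variance_const_mul, variance_id_gaussianReal, NNReal.coe_one, mul_one]

lemma integral_sq_const_add_dotProduct_stdGaussian (c : ℝ) (v : κ → ℝ) :
    ∫ w, (c + v ⬝ᵥ w) ^ 2 ∂(Measure.pi fun _ : κ => gaussianReal 0 1) =
      c ^ 2 + ∑ j, v j ^ 2 := by
  have hY := memLp_dotProduct_stdGaussian v
  have hmean : ∫ w, c + v ⬝ᵥ w ∂(Measure.pi fun _ : κ => gaussianReal 0 1) = c := by
    rw [integral_add (integrable_const c) (hY.integrable one_le_two),
      integral_dotProduct_stdGaussian]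
    simp
  have hvar := variance_eq_sub (memLp_const_add_dotProduct_stdGaussian c v)
  rw [variance_const_add hY.aestronglyMeasurable, variance_dotProduct_stdGaussian, hmean] at hvar
  simp only [Pi.pow_apply] at hvar
  linarith

end StdGaussian

lemma W2sq_map_le_integral {ι Ω : Type*} [Fintype ι] [MeasurableSpace Ω] (P : Measure Ω)
    {X Y : Ω → ι → ℝ} (hX : Measurable X) (hY : Measurable Y) :
    W2sq (P.map X) (P.map Y) ≤ ∫ ω, ∑ i, (X ω i - Y ω i) ^ 2 ∂P := by
  have hXY : Measurable fun ω => (X ω, Y ω) := hX.prodMk hY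
  refine (ciInf_le ⟨0, ?_⟩ ⟨P.map fun ω => (X ω, Y ω), Measure.map_map measurable_fst hXY,
    Measure.map_map measurable_snd hXY⟩).trans_eq ?_
  · rintro _ ⟨γ, rfl⟩
    exact integral_nonneg fun p => Finset.sum_nonneg fun i _ => sq_nonneg _
  · exact integral_map hXY.aemeasurable (by fun_prop)

section SumPi

variable {ι ι' : Type*} [Fintype ι] [Fintype ι'] {X : ι ⊕ ι' → Type*}
  [∀ i, MeasurableSpace (X i)] (μ : ∀ i, Measure (X i)) [∀ i, IsProbabilityMeasure (μ i)]

lemma MeasureTheory.Measure.pi_map_comp_inl :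
    (Measure.pi μ).map (fun w i => w (.inl i)) = Measure.pi fun i => μ (.inl i) := by
  calc _ = ((Measure.pi μ).map (MeasurableEquiv.sumPiEquivProdPi X)).map Prod.fst :=
        (Measure.map_map measurable_fst (MeasurableEquiv.measurable _)).symm
    _ = _ := by simp [(measurePreserving_sumPiEquivProdPi μ).map_eq]

lemma MeasureTheory.Measure.pi_map_comp_inr :
    (Measure.pi μ).map (fun w i => w (.inr i)) = Measure.pi fun i => μ (.inr i) := by
  calc _ = ((Measure.pi μ).map (MeasurableEquiv.sumPiEquivProdPi X)).map Prod.snd :=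
        (Measure.map_map measurable_snd (MeasurableEquiv.measurable _)).symm
    _ = _ := by simp [(measurePreserving_sumPiEquivProdPi μ).map_eq]

end SumPi

section PsdSqrt

variable {ι : Type*} [Fintype ι] [DecidableEq ι] {S : Matrix ι ι ℝ}

noncomputable def psdSqrt (hS : S.PosSemidef) : Matrix ι ι ℝ :=
  (hS.1.eigenvectorUnitary : Matrix ι ι ℝ) * diagonal (fun i => √(hS.1.eigenvalues i)) *
    star (hS.1.eigenvectorUnitary : Matrix ι ι ℝ)

lemma gaussianVec_eq_map (m : ι → ℝ) (hS : S.PosSemidef) :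
    gaussianVec m hS =
      (Measure.pi fun _ : ι => gaussianReal 0 1).map fun x => m + psdSqrt hS *ᵥ x :=
  rfl

lemma psdSqrt_transpose (hS : S.PosSemidef) : (psdSqrt hS)ᵀ = psdSqrt hS := by
  simp [psdSqrt, transpose_mul, star_eq_conjTranspose, Matrix.mul_assoc]

lemma psdSqrt_mul_self (hS : S.PosSemidef) : psdSqrt hS * psdSqrt hS = S := by
  set U : Matrix ι ι ℝ := (hS.1.eigenvectorUnitary : Matrix ι ι ℝ)
  have hUU : star U * U = 1 := Unitary.coe_star_mul_self _
  have hD : diagonal (fun i => √(hS.1.eigenvalues i)) * diagonal (fun i => √(hS.1.eigenvalues i))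
      = diagonal hS.1.eigenvalues := by
    rw [diagonal_mul_diagonal]
    exact congrArg diagonal (funext fun i => Real.mul_self_sqrt (hS.eigenvalues_nonneg i))
  have hspec := hS.1.spectral_theorem
  rw [Unitary.conjStarAlgAut_apply] at hspec
  calc psdSqrt hS * psdSqrt hS = U * (diagonal (fun i => √(hS.1.eigenvalues i)) * (star U * U) *
        diagonal (fun i => √(hS.1.eigenvalues i))) * star U := by
        simp only [psdSqrt, U, Matrix.mul_assoc]
    _ = S := by
      rw [hUU, Matrix.mul_one, hD]
      conv_rhs => rw [hspec]
      simp [U]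

lemma sum_sq_psdSqrt (hS : S.PosSemidef) : ∑ i, ∑ j, psdSqrt hS i j ^ 2 = S.trace := by
  calc ∑ i, ∑ j, psdSqrt hS i j ^ 2 = (psdSqrt hS * (psdSqrt hS)ᵀ).trace := by
        simp [trace, mul_apply, sq]
    _ = S.trace := by rw [psdSqrt_transpose, psdSqrt_mul_self]

end PsdSqrt

lemma sub_apply_eq_add_dotProduct {ι : Type*} [Fintype ι] (m₁ m₂ : ι → ℝ) (A B : Matrix ι ι ℝ)
    (w : ι ⊕ ι → ℝ) (i : ι) :
    (m₁ + A *ᵥ (fun j => w (.inl j))) i - (m₂ + B *ᵥ (fun j => w (.inr j))) i =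
      (m₁ i - m₂ i) + Sum.elim (A i) (-B i) ⬝ᵥ w := by
  conv_rhs => rw [← Sum.elim_comp_inl_inr w]
  rw [sumElim_dotProduct_sumElim, neg_dotProduct]
  simp only [Pi.add_apply, mulVec, Function.comp_def]
  ring

theorem W2sq_gaussianVec_le {ι : Type*} [Fintype ι] [DecidableEq ι] (m₁ m₂ : ι → ℝ)
    {S₁ S₂ : Matrix ι ι ℝ} (hS₁ : S₁.PosSemidef) (hS₂ : S₂.PosSemidef) :
    W2sq (gaussianVec m₁ hS₁) (gaussianVec m₂ hS₂) ≤
      ∑ i, (m₁ i - m₂ i) ^ 2 + (S₁.trace + S₂.trace) := by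
  set P := Measure.pi fun _ : ι ⊕ ι => gaussianReal 0 1
  have hmarg₁ : gaussianVec m₁ hS₁ = P.map fun w => m₁ + psdSqrt hS₁ *ᵥ fun j => w (.inl j) := by
    rw [gaussianVec_eq_map, ← Measure.pi_map_comp_inl (fun _ : ι ⊕ ι => gaussianReal 0 1),
      Measure.map_map (by fun_prop) (by fun_prop)]
    rfl
  have hmarg₂ : gaussianVec m₂ hS₂ = P.map fun w => m₂ + psdSqrt hS₂ *ᵥ fun j => w (.inr j) := by
    rw [gaussianVec_eq_map, ← Measure.pi_map_comp_inr (fun _ : ι ⊕ ι => gaussianReal 0 1),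
      Measure.map_map (by fun_prop) (by fun_prop)]
    rfl
  rw [hmarg₁, hmarg₂]
  refine (W2sq_map_le_integral P (by fun_prop) (by fun_prop)).trans_eq ?_
  simp_rw [sub_apply_eq_add_dotProduct]
  rw [integral_finsetSum _ fun i _ => (memLp_const_add_dotProduct_stdGaussian (m₁ i - m₂ i)
    (Sum.elim (psdSqrt hS₁ i) (-psdSqrt hS₂ i))).integrable_sq]
  simp_rw [integral_sq_const_add_dotProduct_stdGaussian, Fintype.sum_sum_type, Sum.elim_inl,
    Sum.elim_inr, Pi.neg_apply, neg_sq, Finset.sum_add_distrib, sum_sq_psdSqrt]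

lemma Gtilde_apply_self {m : ℕ} (t : ℕ) (g : EuclideanSpace ℝ (Fin m)) (i : Fin t) :
    Gtilde t g i i = ‖g‖ ^ 2 := by
  simp only [Gtilde, sub_self, Int.natAbs_zero, Nat.sub_zero, add_zero]
  rw [EuclideanSpace.real_norm_sq_eq, ← Fin.sum_univ_eq_sum_range (fun n => gext g n * gext g n)]
  simp [gext, sq]

lemma trace_Gtilde {m : ℕ} (t : ℕ) (g : EuclideanSpace ℝ (Fin m)) :
    (Gtilde t g).trace = t * ‖g‖ ^ 2 := by
  simp [trace, Gtilde_apply_self]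

lemma convexOn_univ_norm_sq {E : Type*} [SeminormedAddCommGroup E] [NormedSpace ℝ E] :
    ConvexOn ℝ Set.univ fun x : E => ‖x‖ ^ 2 :=
  (convexOn_norm convex_univ).pow (fun _ _ => norm_nonneg _) 2

lemma convexOn_sum_sq_mulVec_sub {κ n : Type*} [Fintype κ] [Fintype n] [DecidableEq n]
    (H : Matrix κ n ℝ) (y : κ → ℝ) :
    ConvexOn ℝ Set.univ fun g : EuclideanSpace ℝ n => ∑ i, ((H *ᵥ ⇑g) i - y i) ^ 2 := by
  have h := convexOn_univ_norm_sq.comp_affineMap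
    ((toEuclideanLin H).toAffineMap - AffineMap.const ℝ _ (WithLp.toLp 2 y))
  simpa [Function.comp_def, EuclideanSpace.real_norm_sq_eq] using h

theorem convex_wasserstein_upper_bound_general {t m ny : ℕ}
    (H : Matrix (Fin t × Fin ny) (Fin m) ℝ) (y : Fin t × Fin ny → ℝ)
    {Sv : Matrix (Fin ny) (Fin ny) ℝ} (hSv : Sv.PosSemidef) :
    (∀ (g : EuclideanSpace ℝ (Fin m))
        (hGS : ((Gtilde t g) ⊗ₖ Sv).PosSemidef)
        (hIS : ((1 : Matrix (Fin t) (Fin t) ℝ) ⊗ₖ Sv).PosSemidef),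
      W2sq (gaussianVec (H *ᵥ ⇑g) hGS) (gaussianVec y hIS) ≤
        ∑ i, ((H *ᵥ ⇑g) i - y i) ^ 2 + (t : ℝ) * Sv.trace * (‖g‖ ^ 2 + 1))
    ∧ ConvexOn ℝ Set.univ
        (fun g : EuclideanSpace ℝ (Fin m) =>
          ∑ i, ((H *ᵥ ⇑g) i - y i) ^ 2 + (t : ℝ) * Sv.trace * (‖g‖ ^ 2 + 1)) := by
  refine ⟨fun g hGS hIS => (W2sq_gaussianVec_le _ _ hGS hIS).trans_eq ?_, ?_⟩
  · rw [trace_kronecker, trace_kronecker, trace_Gtilde, trace_one, Fintype.card_fin]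
    ring
  · have hc : 0 ≤ (t : ℝ) * Sv.trace := mul_nonneg t.cast_nonneg hSv.trace_nonneg
    exact (convexOn_sum_sq_mulVec_sub H y).add ((convexOn_univ_norm_sq.add_const 1).smul hc)

theorem convex_wasserstein_upper_bound {t m ny : ℕ}
    (ht : 1 ≤ t) (hm : 1 ≤ m)
    (H : Matrix (Fin t × Fin ny) (Fin m) ℝ) (y : Fin t × Fin ny → ℝ)
    {Sv : Matrix (Fin ny) (Fin ny) ℝ} (hSv : Sv.PosSemidef) :
    (∀ (g : EuclideanSpace ℝ (Fin m))
        (hGS : ((Gtilde t g) ⊗ₖ Sv).PosSemidef)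
        (hIS : ((1 : Matrix (Fin t) (Fin t) ℝ) ⊗ₖ Sv).PosSemidef),
      W2sq (gaussianVec (H *ᵥ ⇑g) hGS) (gaussianVec y hIS) ≤
        ∑ i, ((H *ᵥ ⇑g) i - y i) ^ 2 + (t : ℝ) * Sv.trace * (‖g‖ ^ 2 + 1))
    ∧ ConvexOn ℝ Set.univ
        (fun g : EuclideanSpace ℝ (Fin m) =>
          ∑ i, ((H *ᵥ ⇑g) i - y i) ^ 2 + (t : ℝ) * Sv.trace * (‖g‖ ^ 2 + 1)) :=
  convex_wasserstein_upper_bound_general H y hSv
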